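/- Let A ∈ M_{m×n}(ℝ), l, u ∈ ℝⁿ, and w ∈ ℝᵐ with wᵀ·A = (c₁,…,cₙ). Define w₂ ∈ ℝⁿ by (w₂)ᵢ = -cᵢ if cᵢ < 0 and 0 otherwise, and w₃ ∈ ℝⁿ by (w₃)ᵢ = cᵢ if cᵢ > 0 and 0 otherwise. Then for every V ∈ ℝⁿ, wᵀ·(A·V) + Σᵢ (w₂)ᵢ·(Vᵢ − lᵢ) + Σᵢ (w₃)ᵢ·(uᵢ − Vᵢ) = Σ_{i: cᵢ>0} cᵢ·uᵢ + Σ_{i: cᵢ<0} cᵢ·lᵢ, a constant independent of V. In particular, if Σ_{i: cᵢ>0} cᵢ·uᵢ + Σ_{i: cᵢ<0} cᵢ·lᵢ < 0, the combination equals a negative constant. -/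

import Mathlib

open scoped Matrix

/-! Write `c := wᵀA`, so that `wᵀ(AV) = Σᵢ cᵢVᵢ`. Coordinatewise, the bound atom with the
coefficient `|cᵢ|` is chosen so that it cancels `cᵢVᵢ`: a positive `cᵢ` pairs with `uᵢ - Vᵢ`
and leaves `cᵢuᵢ`, a negative one pairs with `Vᵢ - lᵢ` and leaves `cᵢlᵢ`. -/

theorem mul_add_bound_combination_eq {R : Type*} [CommRing R] [LinearOrder R] (c v l u : R) :
    c * v + (if c < 0 then -c else 0) * (v - l) + (if 0 < c then c else 0) * (u - v)
      = if 0 < c then c * u else if c < 0 then c * l else 0 := by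
  rcases lt_trichotomy c 0 with hneg | rfl | hpos
  · simp only [hneg, hneg.asymm, if_true, if_false]
    ring
  · simp
  · simp only [hpos, hpos.asymm, if_true, if_false]
    ring

theorem dotProduct_add_bound_combination_eq {ι R : Type*} [Fintype ι] [CommRing R] [LinearOrder R]
    (c V l u : ι → R) :
    c ⬝ᵥ V + (∑ i, (if c i < 0 then -c i else 0) * (V i - l i))
        + (∑ i, (if 0 < c i then c i else 0) * (u i - V i))
      = ∑ i, (if 0 < c i then c i * u i else if c i < 0 then c i * l i else 0) := by
  rw [dotProduct, ← Finset.sum_add_distrib, ← Finset.sum_add_distrib]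
  exact Finset.sum_congr rfl fun i _ => mul_add_bound_combination_eq (c i) (V i) (l i) (u i)

/-- Reduction of Marabou proof vectors to the Alethe `la_generic` form:
the weighted combination of equality rows, lower-bound atoms, and
upper-bound atoms is a constant independent of V, namely
Σ_{cᵢ>0} cᵢuᵢ + Σ_{cᵢ<0} cᵢlᵢ; in particular it is negative whenever that
constant is. -/
theorem marabou_to_alethe_reduction {m n : ℕ}
    (A : Matrix (Fin m) (Fin n) ℝ) (l u : Fin n → ℝ) (w : Fin m → ℝ)
    (c : Fin n → ℝ) (hc : c = Matrix.vecMul w A)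
    (w₂ w₃ : Fin n → ℝ)
    (hw₂ : ∀ i, w₂ i = if c i < 0 then -c i else 0)
    (hw₃ : ∀ i, w₃ i = if 0 < c i then c i else 0) :
    (∀ V : Fin n → ℝ,
      w ⬝ᵥ A.mulVec V + (∑ i, w₂ i * (V i - l i)) + (∑ i, w₃ i * (u i - V i))
        = ∑ i, (if 0 < c i then c i * u i else if c i < 0 then c i * l i else 0)) ∧
    ((∑ i, (if 0 < c i then c i * u i else if c i < 0 then c i * l i else 0)) < 0 →
      ∀ V : Fin n → ℝ,
        w ⬝ᵥ A.mulVec V + (∑ i, w₂ i * (V i - l i)) + (∑ i, w₃ i * (u i - V i)) < 0) := by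
  obtain rfl : w₂ = _ := funext hw₂
  obtain rfl : w₃ = _ := funext hw₃
  have hconst : ∀ V : Fin n → ℝ,
      w ⬝ᵥ A.mulVec V + (∑ i, (if c i < 0 then -c i else 0) * (V i - l i))
          + (∑ i, (if 0 < c i then c i else 0) * (u i - V i))
        = ∑ i, (if 0 < c i then c i * u i else if c i < 0 then c i * l i else 0) := fun V => by
    rw [Matrix.dotProduct_mulVec, ← hc]
    exact dotProduct_add_bound_combination_eq c V l u
  exact ⟨hconst, fun hneg V => hconst V ▸ hneg⟩
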